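/- Let m ≥ 1 and let M, I_S : Fin m → ℝ be probability vectors with I_S i > 0 for all i and M ≠ I_S. Let λ_L = max_i (1 − M i / I_S i) and assume λ_L > 0. For λ̂ ∈ (0, 1] define l̂_{λ̂} i = (1/λ̂)·M i + (1 − 1/λ̂)·I_S i. Then for every λ̂ with λ_L ≤ λ̂ ≤ 1, D(l̂_{λ̂}, I_S) ≤ D(l̂_{λ_L}, I_S); that is, among all admissible coefficients, the lower bound λ_L yields the maximum KL-divergence between DSM's output distribution and the seed irrelevance distribution. -/

import Mathlib

/-!
Writing `θ = λ_L / λ̂ ∈ [0, 1]`, the output `l̂_{λ̂}` is the mixture `(1 - θ) I_S + θ l̂_{λ_L}`.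
Since `p ↦ D(p, I_S)` is convex and vanishes at `I_S`, this gives
`D(l̂_{λ̂}, I_S) ≤ θ D(l̂_{λ_L}, I_S)`, which is at most `D(l̂_{λ_L}, I_S)` by Gibbs' inequality.
-/

/-- KL-divergence `D(p, q) = Σ_i p i · log(p i / q i)`. A summand with `p i = 0`
contributes `0 · log 0 = 0`, matching the usual convention. -/
noncomputable def KL {m : ℕ} (p q : Fin m → ℝ) : ℝ :=
  ∑ i, p i * Real.log (p i / q i)

open Real InformationTheory

section KL

variable {m : ℕ} {p p₁ p₂ q : Fin m → ℝ}

-- Convexity and nonnegativity of `D(·, q)` are inherited from `klFun` through this identity.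
lemma KL_eq_sum_mul_klFun (hq : ∀ i, 0 < q i) (hsum : ∑ i, p i = ∑ i, q i) :
    KL p q = ∑ i, q i * klFun (p i / q i) := by
  have hterm : ∀ i, p i * log (p i / q i) = q i * klFun (p i / q i) + (p i - q i) := by
    intro i
    have hqi := (hq i).ne'
    rw [klFun_apply]
    field_simp
    ring
  simp only [KL, hterm, Finset.sum_add_distrib, Finset.sum_sub_distrib, hsum, sub_self, add_zero]

lemma KL_self (q : Fin m → ℝ) (hq : ∀ i, 0 < q i) : KL q q = 0 := by
  simp [KL, div_self (hq _).ne']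

lemma KL_nonneg (hp : ∀ i, 0 ≤ p i) (hq : ∀ i, 0 < q i) (hsum : ∑ i, p i = ∑ i, q i) :
    0 ≤ KL p q := by
  rw [KL_eq_sum_mul_klFun hq hsum]
  exact Finset.sum_nonneg fun i _ =>
    mul_nonneg (hq i).le (klFun_nonneg (div_nonneg (hp i) (hq i).le))

lemma KL_convex_combination_le (hp₁ : ∀ i, 0 ≤ p₁ i) (hp₂ : ∀ i, 0 ≤ p₂ i)
    (hq : ∀ i, 0 < q i) (hsum₁ : ∑ i, p₁ i = ∑ i, q i) (hsum₂ : ∑ i, p₂ i = ∑ i, q i)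
    {θ : ℝ} (hθ₀ : 0 ≤ θ) (hθ₁ : θ ≤ 1) :
    KL (fun i => (1 - θ) * p₁ i + θ * p₂ i) q ≤ (1 - θ) * KL p₁ q + θ * KL p₂ q := by
  have hsum : ∑ i, ((1 - θ) * p₁ i + θ * p₂ i) = ∑ i, q i := by
    rw [Finset.sum_add_distrib, ← Finset.mul_sum, ← Finset.mul_sum, hsum₁, hsum₂]
    ring
  rw [KL_eq_sum_mul_klFun hq hsum, KL_eq_sum_mul_klFun hq hsum₁, KL_eq_sum_mul_klFun hq hsum₂,
    Finset.mul_sum, Finset.mul_sum, ← Finset.sum_add_distrib]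
  refine Finset.sum_le_sum fun i _ => ?_
  have hqi := hq i
  have hconv := convexOn_klFun.2 (Set.mem_Ici.2 (div_nonneg (hp₁ i) hqi.le))
    (Set.mem_Ici.2 (div_nonneg (hp₂ i) hqi.le)) (sub_nonneg.2 hθ₁) hθ₀ (by ring)
  have hmix : ((1 - θ) * p₁ i + θ * p₂ i) / q i = (1 - θ) * (p₁ i / q i) + θ * (p₂ i / q i) := by
    field_simp
  simp only [smul_eq_mul] at hconv
  rw [hmix]
  calc q i * klFun ((1 - θ) * (p₁ i / q i) + θ * (p₂ i / q i))
      ≤ q i * ((1 - θ) * klFun (p₁ i / q i) + θ * klFun (p₂ i / q i)) :=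
        mul_le_mul_of_nonneg_left hconv hqi.le
    _ = _ := by ring

end KL

section DSM

variable {ι : Type*} (M IS : ι → ℝ)

/-- The DSM output `l̂_λ`. -/
noncomputable def dsmOutput (lam : ℝ) : ι → ℝ :=
  fun i => (1 / lam) * M i + (1 - 1 / lam) * IS i

variable {M IS}

lemma sum_dsmOutput [Fintype ι] (hsum : ∑ i, M i = ∑ i, IS i) (lam : ℝ) :
    ∑ i, dsmOutput M IS lam i = ∑ i, IS i := by
  simp only [dsmOutput, Finset.sum_add_distrib, ← Finset.mul_sum, hsum]
  ring

lemma dsmOutput_nonneg {lam : ℝ} (hlam : 0 < lam) {i : ι} (hIS : 0 < IS i)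
    (hle : 1 - M i / IS i ≤ lam) : 0 ≤ dsmOutput M IS lam i := by
  have hM : (1 - lam) * IS i ≤ M i := by
    have := (le_div_iff₀ hIS).1 (by linarith : 1 - lam ≤ M i / IS i)
    linarith
  have heq : dsmOutput M IS lam i = (1 / lam) * (M i - (1 - lam) * IS i) := by
    simp only [dsmOutput]
    field_simp
    ring
  rw [heq]
  exact mul_nonneg (by positivity) (by linarith)

lemma dsmOutput_eq_convex_combination {lam₀ lam : ℝ} (hlam₀ : lam₀ ≠ 0) (hlam : lam ≠ 0) :
    dsmOutput M IS lam =
      fun i => (1 - lam₀ / lam) * IS i + lam₀ / lam * dsmOutput M IS lam₀ i := by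
  funext i
  simp only [dsmOutput]
  field_simp
  ring

end DSM

theorem stmt_19_general (m : ℕ) (hm : 1 ≤ m) (M IS : Fin m → ℝ)
    (hMsum : ∑ i, M i = 1)
    (hISpos : ∀ i, 0 < IS i) (hISsum : ∑ i, IS i = 1)
    (lamL : ℝ)
    (hlamL : lamL = Finset.univ.sup'
        (Finset.univ_nonempty_iff.mpr (Fin.pos_iff_nonempty.mp hm))
        (fun i => 1 - M i / IS i))
    (hlamLpos : 0 < lamL) :
    ∀ lam : ℝ, lamL ≤ lam → lam ≤ 1 →
      KL (fun i => (1 / lam) * M i + (1 - 1 / lam) * IS i) IS ≤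
        KL (fun i => (1 / lamL) * M i + (1 - 1 / lamL) * IS i) IS := by
  intro lam hlow hup
  have hlam : 0 < lam := hlamLpos.trans_le hlow
  have hsum : ∑ i, M i = ∑ i, IS i := hMsum.trans hISsum.symm
  have hL_nonneg : ∀ i, 0 ≤ dsmOutput M IS lamL i := fun i =>
    dsmOutput_nonneg hlamLpos (hISpos i)
      (hlamL ▸ Finset.le_sup' (fun i => 1 - M i / IS i) (Finset.mem_univ i))
  have hθ₁ : lamL / lam ≤ 1 := (div_le_one hlam).2 hlow
  have hmix := KL_convex_combination_le (fun i => (hISpos i).le) hL_nonneg hISpos rfl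
    (sum_dsmOutput hsum lamL) (by positivity) hθ₁
  rw [← dsmOutput_eq_convex_combination hlamLpos.ne' hlam.ne', KL_self IS hISpos] at hmix
  have hKL_nonneg := KL_nonneg hL_nonneg hISpos (sum_dsmOutput hsum lamL)
  calc KL (dsmOutput M IS lam) IS
      ≤ (1 - lamL / lam) * 0 + lamL / lam * KL (dsmOutput M IS lamL) IS := hmix
    _ ≤ KL (dsmOutput M IS lamL) IS := by nlinarith

/-- among all admissible coefficients `λ̂ ∈ [λ_L, 1]`, the lower bound
`λ_L = max_i (1 − M i / I_S i)` yields the maximum KL-divergence between DSM's output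
`l̂_λ̂ = (1/λ̂)·M + (1 − 1/λ̂)·I_S` and the seed irrelevance distribution `I_S`. -/
theorem stmt_19 (m : ℕ) (hm : 1 ≤ m) (M IS : Fin m → ℝ)
    (hMnn : ∀ i, 0 ≤ M i) (hMsum : ∑ i, M i = 1)
    (hISpos : ∀ i, 0 < IS i) (hISsum : ∑ i, IS i = 1)
    (hne : M ≠ IS)
    (lamL : ℝ)
    (hlamL : lamL = Finset.univ.sup'
        (Finset.univ_nonempty_iff.mpr (Fin.pos_iff_nonempty.mp hm))
        (fun i => 1 - M i / IS i))
    (hlamLpos : 0 < lamL) :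
    ∀ lam : ℝ, lamL ≤ lam → lam ≤ 1 →
      KL (fun i => (1 / lam) * M i + (1 - 1 / lam) * IS i) IS ≤
        KL (fun i => (1 / lamL) * M i + (1 - 1 / lamL) * IS i) IS :=
  stmt_19_general m hm M IS hMsum hISpos hISsum lamL hlamL hlamLpos
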